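/- arXiv:1201.4724 — 2 statements merged into one kernel-verified Lean document; each statement's English description precedes it below -/
import Mathlib

section
/- With messages M_{i→j}(X_{S_{ij}}) = ∑_{X_{V_{i→j}}} ∏_{u ∈ U_{i→j}} K_u(X_{fa(u)}) and cluster potentials Φ_j(X_{C_j}) = ∏_{u : cl(u) = j} K_u(X_{fa(u)}), for every cluster j of the junction tree: P(X_{C_j}, E) = Φ_j(X_{C_j}) · ∏_{i ∈ n(j)} M_{i→j}(X_{S_{ij}}), where n(j) is the set of tree-neighbors of j. -/
open Finset
open scoped Classical

/-- A junction tree for a Bayesian network with variable index set `U`: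
a tree of clusters `C i ⊆ U` (indexed by `I`) satisfying the covering property
(via a cluster assignment `cl` with `fa(u) = {u} ∪ pa(u) ⊆ C (cl u)`) and the
running-intersection property. -/
structure JT (U : Type) [Fintype U] [DecidableEq U] (I : Type) [Fintype I] where
  /-- the tree on clusters -/
  G : SimpleGraph I
  tree : G.IsTree
  /-- the clusters -/
  C : I → Finset U
  /-- the parent sets of the DAG of the Bayesian network -/
  pa : U → Finset U
  /-- the cluster assignment -/
  cl : U → I
  /-- covering: the family fa(u) of each variable is contained in its assigned cluster -/
  cover : ∀ u : U, insert u (pa u) ⊆ C (cl u)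
  /-- running intersection -/
  runInter : ∀ i j : I, ∀ pth : G.Path i j, ∀ k ∈ pth.1.support, C i ∩ C j ⊆ C k

/-- The upstream set U_{i→j} : variables whose assigned cluster lies on the `i` side
of the edge i–j, i.e. `i` is on the path from `cl u` to `j`. -/
noncomputable def upSet {U I : Type} [Fintype U] [DecidableEq U] [Fintype I]
    (J : JT U I) (i j : I) : Finset U :=
  Finset.univ.filter fun u => ∃ pth : J.G.Path (J.cl u) j, i ∈ pth.1.support

/-- The separator S_{ij} = C i ∩ C j of an edge. -/
def sep {U I : Type} [Fintype U] [DecidableEq U] [Fintype I]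
    (J : JT U I) (i j : I) : Finset U := J.C i ∩ J.C j

/-- Marginal of a nonnegative function `f` on assignments: sum of `f` over all
assignments agreeing with `x` on the coordinates in `A`. -/
noncomputable def margOn {U : Type} [Fintype U] [DecidableEq U] {D : U → Type}
    [∀ u, Fintype (D u)] [∀ u, DecidableEq (D u)]
    (f : (∀ u, D u) → ℝ) (A : Finset U) (x : ∀ u, D u) : ℝ :=
  ∑ z : ∀ u, D u, if ∀ v ∈ A, z v = x v then f z else 0

/-- The message M_{i→j}(X_{S_ij}) = ∑_{X_{V_{i→j}}} ∏_{u ∈ U_{i→j}} K_u, realized as a sum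
over full assignments agreeing with `x` outside V_{i→j} = U_{i→j} \ S_{ij}. -/
noncomputable def msg {U I : Type} [Fintype U] [DecidableEq U] [Fintype I]
    (J : JT U I) {D : U → Type} [∀ u, Fintype (D u)] [∀ u, DecidableEq (D u)]
    (K : (u : U) → (∀ v, D v) → ℝ) (i j : I) (x : ∀ u, D u) : ℝ :=
  ∑ z : ∀ u, D u,
    if ∀ v, v ∉ upSet J i j \ sep J i j → z v = x v
    then ∏ u ∈ upSet J i j, K u z else 0

/-- The neighbor set n(j) of a cluster in the junction tree. -/
noncomputable def nbr {U I : Type} [Fintype U] [DecidableEq U] [Fintype I]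
    (J : JT U I) (j : I) : Finset I :=
  Finset.univ.filter fun i => J.G.Adj i j

/-- The cluster potential Φ_j = ∏_{u : cl u = j} K_u. -/
noncomputable def pot {U I : Type} [Fintype U] [DecidableEq U] [Fintype I]
    (J : JT U I) {D : U → Type} [∀ u, Fintype (D u)] [∀ u, DecidableEq (D u)]
    (K : (u : U) → (∀ v, D v) → ℝ) (j : I) (x : ∀ u, D u) : ℝ :=
  ∏ u ∈ Finset.univ.filter (fun u => J.cl u = j), K u x

/-!
The variables assigned to `j` and the upstream sets `U_{i→j}`, `i ∈ n(j)`, partition `U`, so the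
joint product splits as `Φ_j · ∏_i ∏_{u ∈ U_{i→j}} K_u`. With `X_{C_j}` fixed, the variables summed
out are the disjoint blocks `V_{i→j} = U_{i→j} \ S_{ij}`. If `u ∈ U_{i→j}` and `v ∈ fa(u)` is not
upstream of `i`, the tree path from `cl u` to `cl v` passes through `j`, so `v ∈ C_j` by running
intersection. Hence the `i`-th factor depends only on its own block and on `X_{C_j}`, and the sum of
the product is the product of the sums, i.e. of the messages.
-/

namespace SimpleGraph

variable {V : Type*} {G : SimpleGraph V}

theorem IsAcyclic.edges_subset_of_isPath (hG : G.IsAcyclic) {u v : V} {p : G.Walk u v}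
    (hp : p.IsPath) (w : G.Walk u v) : p.edges ⊆ w.edges := by
  obtain rfl : p = w.bypass :=
    congrArg Subtype.val ((hG.subsingleton_path u v).elim ⟨p, hp⟩ ⟨_, w.bypass_isPath⟩)
  exact w.edges_bypass_subset_edges

theorem IsAcyclic.mem_support_of_mem_path_of_notMem_path (hG : G.IsAcyclic) {i j a b : V}
    (hij : G.Adj i j) {p : G.Walk a j} (hp : p.IsPath) (hi : i ∈ p.support)
    {q : G.Walk b j} (hiq : i ∉ q.support) (r : G.Walk a b) : j ∈ r.support := by
  have hnil : ¬p.Nil := fun h => hij.ne <| by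
    rw [Walk.nil_iff_support_eq.mp h, List.mem_singleton] at hi
    exact hi.trans h.eq
  -- `s(i, j)` is the last edge of `p`, hence lies on every walk from `a` to `j`, but not on `q`.
  have hedge : s(i, j) ∈ (r.append q).edges := hG.edges_subset_of_isPath hp _ <|
    hG.eq_penultimate_of_adj_end hp hij.symm hi ▸ p.mk_penultimate_end_mem_edges hnil
  rw [Walk.edges_append, List.mem_append] at hedge
  exact hedge.elim r.snd_mem_support_of_mem_edges
    fun h => absurd (q.fst_mem_support_of_mem_edges h) hiq

end SimpleGraph

theorem DependsOn.finset_prod {ι κ : Type*} {α : ι → Type*} {β : Type*} [CommMonoid β]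
    {s : Finset κ} {f : κ → (∀ i, α i) → β} {t : Set ι} (hf : ∀ k ∈ s, DependsOn (f k) t) :
    DependsOn (fun z => ∏ k ∈ s, f k z) t :=
  fun _ _ h => prod_congr rfl fun k hk => hf k hk h

section SumOver

variable {U : Type} [Fintype U] [DecidableEq U] {D : U → Type} [∀ u, Fintype (D u)]
  [∀ u, DecidableEq (D u)] {R : Type*} [CommSemiring R]

/-- `∑_{X_A} f(X_A, x_{U \ A})`: the variables in `A` are summed out, the others fixed by `x`. -/
noncomputable def sumOver (A : Finset U) (f : (∀ u, D u) → R) (x : ∀ u, D u) : R :=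
  ∑ z : ∀ u, D u, if ∀ v, v ∉ A → z v = x v then f z else 0

theorem sumOver_empty (f : (∀ u, D u) → R) (x : ∀ u, D u) : sumOver ∅ f x = f x := by
  simp [sumOver, ← funext_iff]

theorem sumOver_union_mul {A B : Finset U} (hAB : Disjoint A B) {f g : (∀ u, D u) → R}
    (hf : DependsOn f (B : Set U)ᶜ) (hg : DependsOn g (A : Set U)ᶜ) (x : ∀ u, D u) :
    sumOver (A ∪ B) (fun z => f z * g z) x = sumOver A f x * sumOver B g x := by
  simp only [sumOver]
  rw [← sum_filter, ← sum_filter, ← sum_filter, sum_mul_sum, ← sum_product']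
  refine sum_nbij' (fun z => (A.piecewise z x, A.piecewise x z)) (fun p => A.piecewise p.1 p.2)
    ?_ ?_ ?_ ?_ ?_
  · intro z hz
    simp only [mem_filter, mem_univ, true_and, mem_product] at hz ⊢
    refine ⟨fun v hv => piecewise_eq_of_notMem _ _ _ hv, fun v hv => ?_⟩
    by_cases hA : v ∈ A
    · exact piecewise_eq_of_mem _ _ _ hA
    · rw [piecewise_eq_of_notMem _ _ _ hA, hz v (by simp [hA, hv])]
  · rintro ⟨z₁, z₂⟩ hz
    simp only [mem_filter, mem_univ, true_and, mem_product] at hz ⊢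
    intro v hv
    rw [mem_union, not_or] at hv
    rw [piecewise_eq_of_notMem _ _ _ hv.1, hz.2 v hv.2]
  · intro z _
    ext v
    by_cases hA : v ∈ A <;> simp [hA]
  · rintro ⟨z₁, z₂⟩ hz
    simp only [mem_filter, mem_univ, true_and, mem_product] at hz
    ext v <;> by_cases hA : v ∈ A <;> simp [hA, hz.1 v, hz.2 v, disjoint_left.mp hAB]
  · intro z hz
    simp only [mem_filter, mem_univ, true_and] at hz
    congr 1
    · refine hf fun v hv => ?_
      by_cases hA : v ∈ A
      · simp [hA]
      · simp [hA, hz v (by simp_all)]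
    · exact hg fun v hv => by simp_all

theorem sumOver_mul_of_dependsOn {A : Finset U} {f g : (∀ u, D u) → R}
    (hf : DependsOn f (A : Set U)ᶜ) (x : ∀ u, D u) :
    sumOver A (fun z => f z * g z) x = f x * sumOver A g x := by
  simpa [sumOver_empty] using
    sumOver_union_mul (disjoint_empty_left A) hf (by simpa using dependsOn_univ g) x

theorem sumOver_biUnion_prod {ι : Type*} [DecidableEq ι] (s : Finset ι) {A : ι → Finset U}
    (hA : (s : Set ι).PairwiseDisjoint A) {f : ι → (∀ u, D u) → R}
    (hf : ∀ i ∈ s, DependsOn (f i) (A i ∪ (s.biUnion A : Set U)ᶜ)) (x : ∀ u, D u) :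
    sumOver (s.biUnion A) (fun z => ∏ i ∈ s, f i z) x = ∏ i ∈ s, sumOver (A i) (f i) x := by
  induction s using Finset.induction_on with
  | empty => simp [sumOver_empty]
  | insert i₀ s hi₀ ih =>
    have hA₀ : ∀ i ∈ s, Disjoint (A i₀) (A i) := fun i hi =>
      hA (mem_insert_self i₀ s) (mem_insert_of_mem hi) (ne_of_mem_of_not_mem hi hi₀).symm
    have hdisj : Disjoint (A i₀) (s.biUnion A) := (disjoint_biUnion_right _ _ _).mpr hA₀
    simp only [prod_insert hi₀, biUnion_insert] at hf ⊢
    rw [sumOver_union_mul hdisj, ih (hA.subset (by simp)) fun i hi => ?_]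
    · refine (hf i (mem_insert_of_mem hi)).mono ?_
      gcongr
      exact subset_union_right
    · refine (hf i₀ (mem_insert_self i₀ s)).mono <| Set.union_subset ?_ ?_
      · exact Set.subset_compl_iff_disjoint_right.mpr (disjoint_coe.mpr hdisj)
      · gcongr
        exact subset_union_right
    · refine DependsOn.finset_prod fun i hi => (hf i (mem_insert_of_mem hi)).mono <|
        Set.union_subset ?_ ?_
      · exact Set.subset_compl_iff_disjoint_right.mpr (disjoint_coe.mpr (hA₀ i hi).symm)
      · gcongr
        exact subset_union_left

end SumOver

theorem margOn_eq_sumOver {U : Type} [Fintype U] [DecidableEq U] {D : U → Type}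
    [∀ u, Fintype (D u)] [∀ u, DecidableEq (D u)] (f : (∀ u, D u) → ℝ) (A : Finset U)
    (x : ∀ u, D u) : margOn f A x = sumOver Aᶜ f x := by
  simp only [margOn, sumOver, mem_compl, not_not]

section JunctionTree

variable {U I : Type} [Fintype U] [DecidableEq U] [Fintype I] {J : JT U I}

theorem JT.nonempty_path (J : JT U I) (a b : I) : Nonempty (J.G.Path a b) :=
  ⟨(J.tree.connected.preconnected a b).some.toPath⟩

theorem mem_upSet {i j : I} {u : U} :
    u ∈ upSet J i j ↔ ∃ pth : J.G.Path (J.cl u) j, i ∈ pth.1.support := by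
  simp [upSet]

theorem mem_nbr {i j : I} : i ∈ nbr J j ↔ J.G.Adj i j := by
  simp [nbr]

theorem upSet_disjoint {i i' j : I} (hi : J.G.Adj i j) (hi' : J.G.Adj i' j) (hne : i ≠ i') :
    Disjoint (upSet J i j) (upSet J i' j) := by
  refine disjoint_left.mpr fun u hu hu' => hne ?_
  obtain ⟨p, hip⟩ := mem_upSet.mp hu
  obtain ⟨p', hip'⟩ := mem_upSet.mp hu'
  rw [(J.tree.isAcyclic.subsingleton_path _ _).elim p' p] at hip'
  exact (J.tree.isAcyclic.eq_penultimate_of_adj_end p.2 hi.symm hip).trans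
    (J.tree.isAcyclic.eq_penultimate_of_adj_end p.2 hi'.symm hip').symm

theorem cl_ne_of_mem_upSet {i j : I} (hij : J.G.Adj i j) {u : U} (hu : u ∈ upSet J i j) :
    J.cl u ≠ j := by
  rintro rfl
  obtain ⟨p, hi⟩ := mem_upSet.mp hu
  rw [SimpleGraph.Walk.nil_iff_support_eq.mp (SimpleGraph.Walk.isPath_iff_nil.mp p.2),
    List.mem_singleton] at hi
  exact hij.ne hi

theorem exists_adj_mem_upSet {j : I} {u : U} (h : J.cl u ≠ j) :
    ∃ i, J.G.Adj i j ∧ u ∈ upSet J i j := by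
  obtain ⟨p⟩ := J.nonempty_path (J.cl u) j
  exact ⟨p.1.penultimate, p.1.adj_penultimate (SimpleGraph.Walk.not_nil_of_ne h),
    mem_upSet.mpr ⟨p, p.1.getVert_mem_support _⟩⟩

theorem mem_C_of_mem_upSet {i j : I} {u : U} (hu : u ∈ upSet J i j) (hC : u ∈ J.C j) :
    u ∈ J.C i := by
  obtain ⟨p, hip⟩ := mem_upSet.mp hu
  exact J.runInter _ _ p i hip (mem_inter.mpr ⟨J.cover u (mem_insert_self _ _), hC⟩)

theorem mem_C_of_mem_C_cl_of_notMem_upSet {i j : I} (hij : J.G.Adj i j) {u v : U}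
    (hu : u ∈ upSet J i j) (hv : v ∈ J.C (J.cl u)) (hv' : v ∉ upSet J i j) : v ∈ J.C j := by
  obtain ⟨p, hip⟩ := mem_upSet.mp hu
  obtain ⟨q⟩ := J.nonempty_path (J.cl v) j
  obtain ⟨r⟩ := J.nonempty_path (J.cl u) (J.cl v)
  have hiq : i ∉ q.1.support := fun h => hv' (mem_upSet.mpr ⟨q, h⟩)
  have hjr := J.tree.isAcyclic.mem_support_of_mem_path_of_notMem_path hij p.2 hip hiq r.1
  exact J.runInter _ _ r j hjr (mem_inter.mpr ⟨hv, J.cover v (mem_insert_self _ _)⟩)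

theorem compl_C_eq_biUnion (j : I) :
    (J.C j)ᶜ = (nbr J j).biUnion fun i => upSet J i j \ sep J i j := by
  ext v
  simp only [mem_compl, mem_biUnion, mem_sdiff, mem_nbr, sep, mem_inter]
  constructor
  · intro hv
    obtain ⟨i, hij, hvi⟩ := exists_adj_mem_upSet fun h => hv (h ▸ J.cover v (mem_insert_self _ _) :)
    exact ⟨i, hij, hvi, fun h => hv h.2⟩
  · rintro ⟨i, -, hvi, hv⟩ hvj
    exact hv ⟨mem_C_of_mem_upSet hvi hvj, hvj⟩

theorem prod_univ_eq_prod_cl_mul_prod_upSet {M : Type*} [CommMonoid M] (f : U → M) (j : I) :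
    ∏ u, f u = (∏ u ∈ univ.filter (J.cl · = j), f u) * ∏ i ∈ nbr J j, ∏ u ∈ upSet J i j, f u := by
  have hdisj : Disjoint (univ.filter (J.cl · = j)) ((nbr J j).biUnion (upSet J · j)) := by
    simp only [disjoint_left, mem_filter, mem_biUnion, mem_nbr]
    rintro u ⟨-, hu⟩ ⟨i, hij, hui⟩
    exact cl_ne_of_mem_upSet hij hui hu
  have hcover : univ.filter (J.cl · = j) ∪ (nbr J j).biUnion (upSet J · j) = univ := by
    refine eq_univ_of_forall fun u => ?_
    by_cases hu : J.cl u = j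
    · simp [hu]
    · obtain ⟨i, hij, hui⟩ := exists_adj_mem_upSet hu
      exact mem_union_right _ (mem_biUnion.mpr ⟨i, mem_nbr.mpr hij, hui⟩)
  rw [← prod_biUnion fun i hi i' hi' => upSet_disjoint (mem_nbr.mp hi) (mem_nbr.mp hi'),
    ← prod_union hdisj, hcover]

theorem pairwiseDisjoint_upSet_sdiff_sep (j : I) :
    (nbr J j : Set I).PairwiseDisjoint fun i => upSet J i j \ sep J i j :=
  fun _ hi _ hi' hne => disjoint_of_subset_left sdiff_subset <|
    disjoint_of_subset_right sdiff_subset <| upSet_disjoint (mem_nbr.mp hi) (mem_nbr.mp hi') hne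

section Potentials

variable {D : U → Type} {M : Type*} [CommMonoid M] {K : U → (∀ u, D u) → M}

theorem dependsOn_prod_cl (hK : ∀ u, DependsOn (K u) (insert u (J.pa u) : Finset U)) (j : I) :
    DependsOn (fun z => ∏ u ∈ univ.filter (J.cl · = j), K u z) (J.C j) :=
  DependsOn.finset_prod fun u hu => (hK u).mono fun _ hv => (mem_filter.mp hu).2 ▸ J.cover u hv

theorem dependsOn_prod_upSet (hK : ∀ u, DependsOn (K u) (insert u (J.pa u) : Finset U))
    {i j : I} (hij : J.G.Adj i j) :
    DependsOn (fun z => ∏ u ∈ upSet J i j, K u z) (upSet J i j \ sep J i j ∪ J.C j : Finset U) :=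
  DependsOn.finset_prod fun u hu => (hK u).mono fun v hv => by
    by_cases hvj : v ∈ J.C j
    · exact mem_union_right _ hvj
    · have hvi : v ∈ upSet J i j := by_contra fun hvi =>
        hvj (mem_C_of_mem_C_cl_of_notMem_upSet hij hu (J.cover u hv) hvi)
      exact mem_union_left _ (mem_sdiff.mpr ⟨hvi, fun h => hvj (mem_inter.mp h).2⟩)

end Potentials

end JunctionTree

/-- Cluster marginal with evidence: P(X_{C_j}, E) = Φ_j(X_{C_j}) · ∏_{i ∈ n(j)} M_{i→j}(X_{S_ij}). -/
theorem jt_cluster_marginal {U I : Type} [Fintype U] [DecidableEq U] [Fintype I]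
    (J : JT U I) {D : U → Type} [∀ u, Fintype (D u)] [∀ u, DecidableEq (D u)]
    (cpd : (u : U) → (∀ v, D v) → ℝ) (ev : (u : U) → Finset (D u))
    (K : (u : U) → (∀ v, D v) → ℝ)
    (hK : ∀ u x, K u x = (if x u ∈ ev u then (1 : ℝ) else 0) * cpd u x)
    (hloc : ∀ u x x', (∀ v ∈ insert u (J.pa u), x v = x' v) → cpd u x = cpd u x')
    (j : I) (x : ∀ u, D u) :
    margOn (fun z => ∏ u : U, K u z) (J.C j) x =
      pot J K j x * ∏ i ∈ nbr J j, msg J K i j x := by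
  set A : I → Finset U := fun i => upSet J i j \ sep J i j
  have hKloc : ∀ u, DependsOn (K u) (insert u (J.pa u) : Finset U) := fun u z z' h => by
    rw [hK, hK, h u (mem_insert_self _ _), hloc u z z' h]
  have hmsg : ∀ i ∈ nbr J j, DependsOn (fun z => ∏ u ∈ upSet J i j, K u z)
      (A i ∪ ((nbr J j).biUnion A : Set U)ᶜ) := fun i hi => by
    simpa [A, ← compl_C_eq_biUnion] using dependsOn_prod_upSet hKloc (mem_nbr.mp hi)
  calc margOn (fun z => ∏ u, K u z) (J.C j) x
      = sumOver (J.C j)ᶜ (fun z => (∏ u ∈ univ.filter (J.cl · = j), K u z) *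
          ∏ i ∈ nbr J j, ∏ u ∈ upSet J i j, K u z) x := by
        simp only [margOn_eq_sumOver, ← prod_univ_eq_prod_cl_mul_prod_upSet]
    _ = pot J K j x * sumOver ((nbr J j).biUnion A)
          (fun z => ∏ i ∈ nbr J j, ∏ u ∈ upSet J i j, K u z) x := by
        rw [sumOver_mul_of_dependsOn (by simpa using dependsOn_prod_cl hKloc j),
          compl_C_eq_biUnion]
        rfl
    _ = pot J K j x * ∏ i ∈ nbr J j, msg J K i j x := by
        rw [sumOver_biUnion_prod _ (pairwiseDisjoint_upSet_sdiff_sep j) hmsg]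
        rfl
end

section
/- Define max-messages M^max_{i→j}(X_{S_{ij}}) = max over assignments X_{V_{i→j}} of ∏_{u ∈ U_{i→j}} K_u(X_{fa(u)}). Then for any junction-tree edge i–j, max over assignments X_{U \ S_{ij}} of ∏_{u ∈ U} K_u(X_{fa(u)}) equals M^max_{i→j}(X_{S_{ij}}) · M^max_{j→i}(X_{S_{ij}}). -/
open Finset
open scoped Classical

/-- The max-message M^max_{i→j}(X_{S_ij}) = max_{X_{V_{i→j}}} ∏_{u ∈ U_{i→j}} K_u. -/
noncomputable def maxMsg {U I : Type} [Fintype U] [DecidableEq U] [Fintype I]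
    (J : JT U I) {D : U → Type} [∀ u, Fintype (D u)] [∀ u, DecidableEq (D u)]
    (K : (u : U) → (∀ v, D v) → ℝ) (i j : I) (x : ∀ u, D u) : ℝ :=
  (Finset.univ.filter fun z : ∀ u, D u => ∀ v, v ∉ upSet J i j \ sep J i j → z v = x v).sup'
    (Finset.filter_nonempty_iff.mpr ⟨x, Finset.mem_univ x, fun _ _ => rfl⟩)
    (fun z => ∏ u ∈ upSet J i j, K u z)

/-!
Removing the edge `i – j` splits the tree into an `i`-side and a `j`-side, and the potentials
split accordingly into those assigned to each side. By the running-intersection property, a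
variable in the family of a potential on the `i`-side that is itself assigned to the `j`-side
lies in both `C i` and `C j`, i.e. in the separator. Hence, once `X_S` is fixed, the product
over the `i`-side is a function of `X_{V_{i→j}}` alone and the product over the `j`-side a
function of `X_{V_{j→i}}` alone; these are disjoint blocks of free variables, so the maximum of
the (nonnegative) product is the product of the maxima.
-/

open SimpleGraph

namespace SimpleGraph.IsAcyclic

variable {V : Type*} {G : SimpleGraph V}

theorem mem_support_of_mem_support_of_notMem_support (hG : G.IsAcyclic) {a b c k : V}
    (p : G.Path a b) {q : G.Path a c} {r : G.Path b c} (hq : k ∈ q.1.support)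
    (hr : k ∉ r.1.support) : k ∈ p.1.support := by
  have hk := Walk.support_toPath_subset_support (p.1.append r.1)
    ((hG.subsingleton_path a c).elim q (p.1.append r.1).toPath ▸ hq)
  rw [Walk.support_append, List.mem_append] at hk
  exact hk.resolve_right fun h => hr (List.mem_of_mem_tail h)

theorem notMem_support_of_mem_support (hG : G.IsAcyclic) {a i j : V} (hij : i ≠ j)
    {p : G.Path a j} (hi : i ∈ p.1.support) (q : G.Path a i) : j ∉ q.1.support := by
  rw [(hG.subsingleton_path a i).elim q ⟨_, p.2.takeUntil hi⟩]
  exact Walk.endpoint_notMem_support_takeUntil p.2 hi hij.symm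

theorem mem_support_of_notMem_support (hG : G.IsAcyclic) {a i j : V} (hij : G.Adj i j)
    {p : G.Path a j} (hi : i ∉ p.1.support) (q : G.Path a i) : j ∈ q.1.support := by
  rw [(hG.subsingleton_path a i).elim q ⟨_, p.2.concat hi hij.symm⟩]
  simp [Walk.support_concat]

end SimpleGraph.IsAcyclic

section Assignments

variable {ι : Type*} [Fintype ι] [DecidableEq ι] {D : ι → Type*} [∀ i, Fintype (D i)]
  [∀ i, DecidableEq (D i)]

def agreeOutside (x : ∀ i, D i) (V : Finset ι) : Finset (∀ i, D i) :=
  univ.filter fun z => ∀ v, v ∉ V → z v = x v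

theorem mem_agreeOutside {x z : ∀ i, D i} {V : Finset ι} :
    z ∈ agreeOutside x V ↔ ∀ v ∉ V, z v = x v := by
  simp [agreeOutside]

theorem piecewise_mem_agreeOutside (z x : ∀ i, D i) (V : Finset ι) :
    V.piecewise z x ∈ agreeOutside x V :=
  mem_agreeOutside.2 fun _ hv => V.piecewise_eq_of_notMem z x hv

theorem agreeOutside_nonempty (x : ∀ i, D i) (V : Finset ι) : (agreeOutside x V).Nonempty :=
  ⟨x, mem_agreeOutside.2 fun _ _ => rfl⟩

theorem sup'_agreeOutside_union_mul {R : Type*} [Semiring R] [LinearOrder R] [IsOrderedRing R]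
    (x : ∀ i, D i) {V W : Finset ι} {f g : (∀ i, D i) → R} (hf₀ : ∀ z, 0 ≤ f z)
    (hg₀ : ∀ z, 0 ≤ g z) (hf : DependsOn f ↑Wᶜ) (hg : DependsOn g ↑Vᶜ) :
    (agreeOutside x (V ∪ W)).sup' (agreeOutside_nonempty x _) (fun z => f z * g z) =
      (agreeOutside x V).sup' (agreeOutside_nonempty x V) f *
        (agreeOutside x W).sup' (agreeOutside_nonempty x W) g := by
  refine le_antisymm (sup'_le _ _ fun z hz => ?_) ?_
  · have hz : ∀ v ∉ V ∪ W, z v = x v := mem_agreeOutside.1 hz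
    have hfz : f z = f (V.piecewise z x) := hf fun v hv => by
      by_cases hvV : v ∈ V <;> simp_all [Finset.piecewise]
    have hgz : g z = g (W.piecewise z x) := hg fun v hv => by
      by_cases hvW : v ∈ W <;> simp_all [Finset.piecewise]
    have hle_f := le_sup' f (piecewise_mem_agreeOutside z x V)
    rw [hfz, hgz]
    exact mul_le_mul hle_f (le_sup' g (piecewise_mem_agreeOutside z x W)) (hg₀ _)
      ((hf₀ _).trans hle_f)
  · obtain ⟨z₁, hz₁, hf₁⟩ := exists_mem_eq_sup' (agreeOutside_nonempty x V) f
    obtain ⟨z₂, hz₂, hg₂⟩ := exists_mem_eq_sup' (agreeOutside_nonempty x W) g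
    rw [mem_agreeOutside] at hz₁ hz₂
    let z := V.piecewise z₁ (W.piecewise z₂ x)
    have hz : z ∈ agreeOutside x (V ∪ W) := mem_agreeOutside.2 fun v hv => by
      simp_all [z, Finset.piecewise]
    have hfz : f z₁ = f z := hf fun v hv => by
      by_cases hvV : v ∈ V <;> simp_all [z, Finset.piecewise]
    have hgz : g z₂ = g z := hg fun v hv => by
      by_cases hvW : v ∈ W <;> simp_all [z, Finset.piecewise]
    rw [hf₁, hg₂, hfz, hgz]
    exact le_sup' (fun z => f z * g z) hz

end Assignments

namespace JT

variable {U I : Type} [Fintype U] [DecidableEq U] [Fintype I] (J : JT U I) {i j : I}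

theorem sep_comm (i j : I) : sep J i j = sep J j i := inter_comm _ _

theorem mem_upSet_swap_iff (hij : J.G.Adj i j) {u : U} :
    u ∈ upSet J j i ↔ u ∉ upSet J i j := by
  simp only [upSet, mem_filter, mem_univ, true_and, not_exists]
  constructor
  · rintro ⟨q, hj⟩ p hi
    exact J.tree.isAcyclic.notMem_support_of_mem_support hij.ne hi q hj
  · intro h
    obtain ⟨p⟩ := J.tree.connected (J.cl u) j
    obtain ⟨q⟩ := J.tree.connected (J.cl u) i
    exact ⟨q.toPath, J.tree.isAcyclic.mem_support_of_notMem_support hij (h p.toPath) _⟩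

theorem upSet_swap (hij : J.G.Adj i j) : upSet J j i = (upSet J i j)ᶜ :=
  ext fun _ => (J.mem_upSet_swap_iff hij).trans mem_compl.symm

theorem mem_support_of_mem_upSet (hij : J.G.Adj i j) {u v : U} (hu : u ∈ upSet J i j)
    (hv : v ∈ upSet J j i) (p : J.G.Path (J.cl u) (J.cl v)) : i ∈ p.1.support := by
  simp only [upSet, mem_filter, mem_univ, true_and] at hu hv
  obtain ⟨q, hq⟩ := hu
  obtain ⟨r, hr⟩ := hv
  obtain ⟨w⟩ := J.tree.connected (J.cl v) j
  exact J.tree.isAcyclic.mem_support_of_mem_support_of_notMem_support p hq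
    (J.tree.isAcyclic.notMem_support_of_mem_support hij.ne.symm hr w.toPath)

theorem mem_sep_of_mem_family (hij : J.G.Adj i j) {u v : U} (hu : u ∈ upSet J i j)
    (hvu : v ∈ insert u (J.pa u)) (hv : v ∈ upSet J j i) : v ∈ sep J i j := by
  obtain ⟨p⟩ := J.tree.connected (J.cl u) (J.cl v)
  have hv_cl : v ∈ J.C (J.cl u) ∩ J.C (J.cl v) :=
    mem_inter.2 ⟨J.cover u hvu, J.cover v (mem_insert_self v _)⟩
  refine mem_inter.2 ⟨J.runInter _ _ p.toPath i (J.mem_support_of_mem_upSet hij hu hv _) hv_cl,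
    J.runInter _ _ p.toPath.reverse j (J.mem_support_of_mem_upSet hij.symm hv hu _) ?_⟩
  rwa [inter_comm]

theorem prod_upSet_dependsOn {D : U → Type*} {M : Type*} [CommMonoid M] (hij : J.G.Adj i j)
    {K : (u : U) → (∀ v, D v) → M} (hK : ∀ u, DependsOn (K u) ↑(insert u (J.pa u))) :
    DependsOn (fun z => ∏ u ∈ upSet J i j, K u z) ↑(upSet J j i \ sep J j i)ᶜ :=
  fun _ _ h => prod_congr rfl fun u hu => hK u fun v hvu => h v <| by
    simp only [coe_compl, Set.mem_compl_iff, mem_coe, mem_sdiff, not_and, not_not]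
    exact fun hv => J.sep_comm i j ▸ J.mem_sep_of_mem_family hij hu hvu hv

end JT

/-- Max-product propagation: the maximum over assignments of X_{U \ S_ij} of the full product
of potentials factorizes as M^max_{i→j}(X_{S_ij}) · M^max_{j→i}(X_{S_ij}). -/
theorem jt_max_message_factorization {U I : Type} [Fintype U] [DecidableEq U] [Fintype I]
    (J : JT U I) {D : U → Type} [∀ u, Fintype (D u)] [∀ u, DecidableEq (D u)]
    (cpd : (u : U) → (∀ v, D v) → ℝ) (ev : (u : U) → Finset (D u))
    (K : (u : U) → (∀ v, D v) → ℝ)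
    (hK : ∀ u x, K u x = (if x u ∈ ev u then (1 : ℝ) else 0) * cpd u x)
    (hloc : ∀ u x x', (∀ v ∈ insert u (J.pa u), x v = x' v) → cpd u x = cpd u x')
    (hnn : ∀ u x, 0 ≤ cpd u x)
    (i j : I) (hij : J.G.Adj i j) (x : ∀ u, D u) :
    (Finset.univ.filter fun z : ∀ u, D u => ∀ v ∈ sep J i j, z v = x v).sup'
        (Finset.filter_nonempty_iff.mpr ⟨x, Finset.mem_univ x, fun _ _ => rfl⟩)
        (fun z => ∏ u : U, K u z) =
      maxMsg J K i j x * maxMsg J K j i x := by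
  have hK_dep : ∀ u, DependsOn (K u) ↑(insert u (J.pa u)) := fun u z z' h => by
    rw [hK, hK, h u (mem_insert_self _ _), hloc u z z' h]
  have hK₀ : ∀ u z, 0 ≤ K u z := fun u z => by
    rw [hK]
    exact mul_nonneg (by split_ifs <;> norm_num) (hnn u z)
  have hfree : (univ.filter fun z : ∀ u, D u => ∀ v ∈ sep J i j, z v = x v) =
      agreeOutside x ((upSet J i j \ sep J i j) ∪ (upSet J j i \ sep J j i)) := by
    refine filter_congr fun z _ => forall_congr' fun v => ?_
    rw [J.upSet_swap hij, J.sep_comm j i]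
    by_cases hv : v ∈ sep J i j <;> by_cases hu : v ∈ upSet J i j <;> simp [hv, hu]
  calc _ = (agreeOutside x ((upSet J i j \ sep J i j) ∪ (upSet J j i \ sep J j i))).sup'
          (agreeOutside_nonempty x _)
          (fun z => (∏ u ∈ upSet J i j, K u z) * ∏ u ∈ upSet J j i, K u z) := by
        refine sup'_congr _ hfree fun z _ => ?_
        rw [J.upSet_swap hij, prod_mul_prod_compl]
    _ = _ := sup'_agreeOutside_union_mul x (fun _ => prod_nonneg fun _ _ => hK₀ _ _)
      (fun _ => prod_nonneg fun _ _ => hK₀ _ _) (J.prod_upSet_dependsOn hij hK_dep)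
      (J.prod_upSet_dependsOn hij.symm hK_dep)
end
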